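/- arXiv:2401.07317 — 6 statements merged into one kernel-verified Lean document; each statement's English description precedes it below -/
import Mathlib

section
/- For all real numbers λ and μ, the sequence p ↦ (λ^{2p+1} + μ^{2p+1})^{1/(2p+1)} (real odd root) converges as p → ∞, and its limit equals λ if |λ| > |μ|, equals μ if |λ| < |μ|, and equals (λ+μ)/2 if |λ| = |μ|. -/
open Filter Finset

/-- The binary idempotent operation `⊞`. -/
noncomputable def bop (a b : ℝ) : ℝ :=
  if |b| < |a| then a else if |a| < |b| then b else (a + b) / 2

/-- The unique real `(2p+1)`-th root of `t`. -/
noncomputable def oddRoot (p : ℕ) (t : ℝ) : ℝ :=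
  Real.sign t * |t| ^ ((1 : ℝ) / (2 * (p : ℝ) + 1))

/-- `ξ_I[u](α) = Card{i ∈ I : u i = α} − Card{i ∈ I : u i = −α}`. -/
noncomputable def xiMap {ι : Type*} (I : Finset ι) (u : ι → ℝ) (α : ℝ) : ℤ :=
  ((I.filter fun i => u i = α).card : ℤ) - ((I.filter fun i => u i = -α).card : ℤ)

/-- The residual index set `J_I(u)`. -/
noncomputable def resid {ι : Type*} (I : Finset ι) (u : ι → ℝ) : Finset ι :=
  I.filter fun i => xiMap I u (u i) ≠ 0

/-- The `n`-ary extension `⊞_{i ∈ I} u i` of the binary operation `⊞`. -/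
noncomputable def Fop {ι : Type*} (I : Finset ι) (u : ι → ℝ) : ℝ :=
  if h : (resid I u).Nonempty then
    if 0 < xiMap I u ((resid I u).sup' h fun i => |u i|) then (resid I u).sup' h u
    else if xiMap I u ((resid I u).sup' h fun i => |u i|) < 0 then (resid I u).inf' h u
    else 0
  else 0

/-- The Chebyshev norm `max_{i ∈ [n]} |x i|`. -/
noncomputable def chebNorm {n : ℕ} (x : Fin n → ℝ) : ℝ := ⨆ i, |x i|

/-- The ultrametric distance `d_⊞(x,y) = max_i |x_i ⊟ y_i|`. -/
noncomputable def dB {n : ℕ} (x y : Fin n → ℝ) : ℝ := ⨆ i, |bop (x i) (-(y i))|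

/-! If `|μ| < |λ|`, then `λ^(2p+1) + μ^(2p+1) = λ^(2p+1) (1 + (μ/λ)^(2p+1))`, whose odd root is
`λ (1 + (μ/λ)^(2p+1))^(1/(2p+1))`: the base tends to `1` and the exponent to `0`, so the root
tends to `λ`. For `μ = λ` the same factorisation gives `λ 2^(1/(2p+1)) → λ`, and for `μ = -λ`
the sum vanishes. -/

lemma oddRoot_pow (p : ℕ) (x : ℝ) : oddRoot p (x ^ (2 * p + 1)) = x := by
  have hroot : (|x| ^ (2 * p + 1)) ^ ((1 : ℝ) / (2 * (p : ℝ) + 1)) = |x| := by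
    simpa using Real.pow_rpow_inv_natCast (abs_nonneg x) (Nat.succ_ne_zero (2 * p))
  rw [oddRoot, abs_pow, hroot]
  rcases lt_trichotomy x 0 with hx | rfl | hx
  · rw [Real.sign_of_neg ((odd_two_mul_add_one p).pow_neg hx), abs_of_neg hx]
    ring
  · simp
  · rw [Real.sign_of_pos (pow_pos hx _), abs_of_pos hx, one_mul]

lemma tendsto_one_div_two_mul_add_one :
    Tendsto (fun p : ℕ => (1 : ℝ) / (2 * (p : ℝ) + 1)) atTop (nhds 0) := by
  simp only [one_div]
  exact ((tendsto_natCast_atTop_atTop.const_mul_atTop two_pos).atTop_add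
    tendsto_const_nhds).inv_tendsto_atTop

lemma tendsto_oddRoot_pow_mul (l : ℝ) {s : ℕ → ℝ} {s₀ : ℝ} (hs : ∀ p, 0 ≤ s p)
    (hlim : Tendsto s atTop (nhds s₀)) (hs₀ : s₀ ≠ 0) :
    Tendsto (fun p : ℕ => oddRoot p (l ^ (2 * p + 1) * s p)) atTop (nhds l) := by
  have hfactor : ∀ p : ℕ, l ^ (2 * p + 1) * s p =
      (l * s p ^ ((1 : ℝ) / (2 * (p : ℝ) + 1))) ^ (2 * p + 1) := fun p => by
    rw [mul_pow, ← Real.rpow_natCast (s p ^ _), ← Real.rpow_mul (hs p)]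
    push_cast
    rw [one_div_mul_cancel (by positivity), Real.rpow_one]
  simp only [hfactor, oddRoot_pow]
  simpa using (hlim.rpow tendsto_one_div_two_mul_add_one (Or.inl hs₀)).const_mul l

lemma tendsto_oddRoot_add_pow_of_abs_lt {l m : ℝ} (h : |m| < |l|) :
    Tendsto (fun p : ℕ => oddRoot p (l ^ (2 * p + 1) + m ^ (2 * p + 1))) atTop (nhds l) := by
  have hl : l ≠ 0 := abs_pos.1 ((abs_nonneg m).trans_lt h)
  have hr : |m / l| < 1 := by rwa [abs_div, div_lt_one (abs_pos.2 hl)]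
  have hfactor : ∀ p : ℕ, l ^ (2 * p + 1) + m ^ (2 * p + 1) =
      l ^ (2 * p + 1) * (1 + (m / l) ^ (2 * p + 1)) := fun p => by
    rw [div_pow]; field_simp
  simp only [hfactor]
  refine tendsto_oddRoot_pow_mul l (fun p => ?_) ?_ one_ne_zero
  · have hpow : |m / l| ^ (2 * p + 1) ≤ 1 := pow_le_one₀ (abs_nonneg _) hr.le
    have hlower := neg_abs_le ((m / l) ^ (2 * p + 1))
    rw [abs_pow] at hlower
    linarith
  · have hodd : Tendsto (fun p : ℕ => 2 * p + 1) atTop atTop :=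
      tendsto_atTop_mono (fun p => show p ≤ 2 * p + 1 by omega) tendsto_id
    simpa using ((tendsto_pow_atTop_nhds_zero_of_abs_lt_one hr).comp hodd).const_add 1

/-- the sequence `p ↦ (λ^{2p+1} + μ^{2p+1})^{1/(2p+1)}` converges to `λ ⊞ μ`. -/
theorem stmt0 (l m : ℝ) :
    Filter.Tendsto (fun p : ℕ => oddRoot p (l ^ (2 * p + 1) + m ^ (2 * p + 1)))
      Filter.atTop (nhds (bop l m)) := by
  rcases lt_trichotomy |m| |l| with h | h | h
  · rw [bop, if_pos h]
    exact tendsto_oddRoot_add_pow_of_abs_lt h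
  · rw [bop, if_neg h.not_lt, if_neg h.symm.not_lt]
    rcases abs_eq_abs.1 h with rfl | rfl
    · have hdouble : ∀ p : ℕ, m ^ (2 * p + 1) + m ^ (2 * p + 1) = m ^ (2 * p + 1) * 2 :=
        fun p => by ring
      simp only [hdouble, add_self_div_two]
      exact tendsto_oddRoot_pow_mul m (fun _ => zero_le_two) tendsto_const_nhds two_ne_zero
    · have hcancel : ∀ p : ℕ, l ^ (2 * p + 1) + (-l) ^ (2 * p + 1) = 0 := fun p => by
        rw [(odd_two_mul_add_one p).neg_pow, add_neg_cancel]
      simp only [hcancel, add_neg_cancel, zero_div, oddRoot, Real.sign_zero, zero_mul]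
      exact tendsto_const_nhds
  · rw [bop, if_neg h.not_gt, if_pos h]
    simpa only [add_comm] using tendsto_oddRoot_add_pow_of_abs_lt h
end

section
/- For every n ≥ 1 and every x = (x₁,…,xₙ) ∈ ℝⁿ, the sequence p ↦ (Σ_{i∈[n]} x_i^{2p+1})^{1/(2p+1)} (real odd root) converges as p → ∞ to the n-ary value ⊞_{i∈[n]} x_i defined via residual index sets. -/
open Filter Finset

open Topology

/-!
Grouping the indices by `|u i|` gives `∑ i, u i ^ (2p+1) = ∑ α, ξ(α) α ^ (2p+1)`, so the values
whose signed count `ξ` vanishes cancel exactly; if all of them do, the sum is `0 = ⊞ u`.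
Otherwise let `M` be the largest `|u i|` with `ξ(|u i|) ≠ 0`. After dividing by `M ^ (2p+1)` the
sum tends to `ξ(M) ≠ 0`, and the `(2p+1)`-th root of a sequence with nonzero limit `c` tends to
`sign c`. Hence the roots tend to `sign (ξ M) * M`, which is `⊞ u`.
-/

section Residual

variable {ι : Type*} (I : Finset ι) (u : ι → ℝ)

lemma xiMap_neg (α : ℝ) : xiMap I u (-α) = -xiMap I u α := by
  simp only [xiMap, neg_neg]
  ring

lemma xiMap_zero : xiMap I u 0 = 0 := by
  simp [xiMap]

lemma xiMap_abs_ne_zero {α : ℝ} (h : xiMap I u α ≠ 0) : xiMap I u |α| ≠ 0 := by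
  rcases abs_choice α with hα | hα <;> rw [hα]
  · exact h
  · simpa [xiMap_neg] using h

lemma exists_mem_resid_eq_of_xiMap_pos {α : ℝ} (h : 0 < xiMap I u α) :
    ∃ i ∈ resid I u, u i = α := by
  have hcard : 0 < (I.filter fun i => u i = α).card := by
    rw [xiMap] at h
    omega
  obtain ⟨i, hi⟩ := Finset.card_pos.mp hcard
  rw [Finset.mem_filter] at hi
  exact ⟨i, Finset.mem_filter.mpr ⟨hi.1, hi.2 ▸ h.ne'⟩, hi.2⟩

lemma exists_mem_resid_abs_eq_of_xiMap_ne_zero {α : ℝ} (h : xiMap I u α ≠ 0) :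
    ∃ i ∈ resid I u, |u i| = |α| := by
  rcases h.lt_or_gt with h | h
  · obtain ⟨i, hi, hui⟩ :=
      exists_mem_resid_eq_of_xiMap_pos I u (α := -α) (by rw [xiMap_neg]; omega)
    exact ⟨i, hi, by rw [hui, abs_neg]⟩
  · obtain ⟨i, hi, hui⟩ := exists_mem_resid_eq_of_xiMap_pos I u h
    exact ⟨i, hi, by rw [hui]⟩

lemma sum_filter_abs_eq_pow {k : ℕ} (hk : Odd k) {α : ℝ} (hα : 0 ≤ α) :
    ∑ i ∈ I with |u i| = α, u i ^ k = xiMap I u α * α ^ k := by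
  classical
  rcases hα.eq_or_lt with rfl | hα
  · rw [xiMap_zero, Int.cast_zero, zero_mul]
    exact Finset.sum_eq_zero fun i hi => by
      simp [abs_eq_zero.mp (Finset.mem_filter.mp hi).2, hk.pos.ne']
  have hsplit : I.filter (fun i => |u i| = α) =
      I.filter (fun i => u i = α) ∪ I.filter (fun i => u i = -α) := by
    ext i
    simp [abs_eq hα.le, and_or_left]
  have hdisj : Disjoint (I.filter fun i => u i = α) (I.filter fun i => u i = -α) :=
    Finset.disjoint_filter.mpr fun i _ h h' => by linarith
  rw [hsplit, Finset.sum_union hdisj,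
    Finset.sum_eq_card_nsmul (b := α ^ k) fun i hi => by rw [(Finset.mem_filter.mp hi).2],
    Finset.sum_eq_card_nsmul (b := -α ^ k) fun i hi => by
      rw [(Finset.mem_filter.mp hi).2, hk.neg_pow], xiMap]
  simp only [nsmul_eq_mul]
  push_cast
  ring

lemma sum_pow_eq_sum_xiMap_mul_pow {k : ℕ} (hk : Odd k) :
    ∑ i ∈ I, u i ^ k = ∑ α ∈ I.image (fun i => |u i|), (xiMap I u α : ℝ) * α ^ k := by
  rw [← Finset.sum_fiberwise_of_maps_to (g := fun i => |u i|)
    fun i hi => Finset.mem_image_of_mem (fun i => |u i|) hi]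
  refine Finset.sum_congr rfl fun α hα => ?_
  obtain ⟨j, -, rfl⟩ := Finset.mem_image.mp hα
  exact sum_filter_abs_eq_pow I u hk (abs_nonneg _)

lemma sum_pow_eq_zero_of_not_nonempty_resid (h : ¬(resid I u).Nonempty) {k : ℕ}
    (hk : Odd k) :
    ∑ i ∈ I, u i ^ k = 0 := by
  rw [sum_pow_eq_sum_xiMap_mul_pow I u hk]
  refine Finset.sum_eq_zero fun α _ => ?_
  by_contra hne
  obtain ⟨i, hi, -⟩ := exists_mem_resid_abs_eq_of_xiMap_ne_zero I u
    (Int.cast_ne_zero.mp (left_ne_zero_of_mul hne))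
  exact h ⟨i, hi⟩

lemma Fop_eq_sign_mul (h : (resid I u).Nonempty) :
    Fop I u = Real.sign (xiMap I u ((resid I u).sup' h fun i => |u i|)) *
      (resid I u).sup' h fun i => |u i| := by
  set M := (resid I u).sup' h fun i => |u i| with hM
  have habs : ∀ i ∈ resid I u, |u i| ≤ M := fun i hi => Finset.le_sup' (fun j => |u j|) hi
  unfold Fop
  rw [dif_pos h, ← hM]
  split_ifs with hpos hneg
  · obtain ⟨j, hj, huj⟩ := exists_mem_resid_eq_of_xiMap_pos I u hpos
    have hsup : (resid I u).sup' h u = M :=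
      le_antisymm (Finset.sup'_le h u fun i hi => (abs_le.mp (habs i hi)).2)
        (huj ▸ Finset.le_sup' u hj)
    rw [hsup, Real.sign_of_pos (by exact_mod_cast hpos), one_mul]
  · obtain ⟨j, hj, huj⟩ :=
      exists_mem_resid_eq_of_xiMap_pos I u (α := -M) (by rw [xiMap_neg]; omega)
    have hinf : (resid I u).inf' h u = -M :=
      le_antisymm (huj ▸ Finset.inf'_le u hj)
        (Finset.le_inf' h u fun i hi => (abs_le.mp (habs i hi)).1)
    rw [hinf, Real.sign_of_neg (by exact_mod_cast hneg), neg_one_mul]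
  · rw [show xiMap I u M = 0 by omega, Int.cast_zero, Real.sign_zero, zero_mul]

end Residual

lemma oddRoot_pow_mul {M : ℝ} (hM : 0 ≤ M) (p : ℕ) (t : ℝ) :
    oddRoot p (M ^ (2 * p + 1) * t) = M * oddRoot p t := by
  rcases hM.eq_or_lt with rfl | hM
  · simp [oddRoot]
  have hsign : Real.sign (M ^ (2 * p + 1) * t) = Real.sign t := by
    have hMk : 0 < M ^ (2 * p + 1) := pow_pos hM _
    rcases lt_trichotomy t 0 with ht | rfl | ht
    · rw [Real.sign_of_neg (mul_neg_of_pos_of_neg hMk ht), Real.sign_of_neg ht]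
    · simp
    · rw [Real.sign_of_pos (mul_pos hMk ht), Real.sign_of_pos ht]
  have hexp : (1 : ℝ) / (2 * (p : ℝ) + 1) = ((2 * p + 1 : ℕ) : ℝ)⁻¹ := by push_cast; ring
  rw [oddRoot, oddRoot, hsign, abs_mul, abs_pow, abs_of_pos hM,
    Real.mul_rpow (by positivity) (abs_nonneg t), hexp,
    Real.pow_rpow_inv_natCast hM.le (by omega)]
  ring

lemma tendsto_oddRoot_of_tendsto {b : ℕ → ℝ} {c : ℝ} (hb : Tendsto b atTop (𝓝 c))
    (hc : c ≠ 0) :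
    Tendsto (fun p => oddRoot p (b p)) atTop (𝓝 (Real.sign c)) := by
  have hsign : ∀ᶠ p in atTop, Real.sign c = Real.sign (b p) := by
    rcases hc.lt_or_gt with hc | hc
    · filter_upwards [hb.eventually (gt_mem_nhds hc)] with p hp
      rw [Real.sign_of_neg hp, Real.sign_of_neg hc]
    · filter_upwards [hb.eventually (lt_mem_nhds hc)] with p hp
      rw [Real.sign_of_pos hp, Real.sign_of_pos hc]
  have hexp : Tendsto (fun p : ℕ => (1 : ℝ) / (2 * (p : ℝ) + 1)) atTop (𝓝 0) :=
    tendsto_const_nhds.div_atTop <|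
      (tendsto_natCast_atTop_atTop.const_mul_atTop two_pos).atTop_add tendsto_const_nhds
  have hroot := hb.abs.rpow hexp (.inl (abs_ne_zero.2 hc))
  simpa [oddRoot] using (tendsto_const_nhds.congr' hsign).mul hroot

lemma tendsto_sum_mul_div_pow {S : Finset ℝ} {w : ℝ → ℝ} {M : ℝ} (hM : 0 < M)
    (hMS : M ∈ S)
    (hS : ∀ α ∈ S, w α ≠ 0 → 0 ≤ α ∧ α ≤ M) :
    Tendsto (fun p : ℕ => ∑ α ∈ S, w α * (α / M) ^ (2 * p + 1)) atTop (𝓝 (w M)) := by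
  have hterm : ∀ α ∈ S, Tendsto (fun p : ℕ => w α * (α / M) ^ (2 * p + 1)) atTop
      (𝓝 (if α = M then w α else 0)) := by
    intro α hα
    by_cases hαM : α = M
    · simp [hαM, hM.ne']
    by_cases hw : w α = 0
    · simp [hw]
    obtain ⟨hα0, hαle⟩ := hS α hα hw
    have hpow := (tendsto_pow_atTop_nhds_zero_of_lt_one (div_nonneg hα0 hM.le)
      ((div_lt_one hM).mpr (hαle.lt_of_ne hαM))).comp
      (tendsto_atTop_atTop.mpr fun b => ⟨b, fun p hp => by omega⟩ :
        Tendsto (fun p : ℕ => 2 * p + 1) atTop atTop)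
    simpa [hαM] using hpow.const_mul (w α)
  simpa [Finset.sum_ite_eq', hMS] using tendsto_finsetSum S hterm

theorem tendsto_oddRoot_sum_pow {ι : Type*} (I : Finset ι) (u : ι → ℝ) :
    Tendsto (fun p : ℕ => oddRoot p (∑ i ∈ I, u i ^ (2 * p + 1))) atTop (𝓝 (Fop I u)) := by
  by_cases h : (resid I u).Nonempty
  swap
  · simp [Fop, h, sum_pow_eq_zero_of_not_nonempty_resid I u h (odd_two_mul_add_one _),
      oddRoot]
  obtain ⟨i₀, hi₀, hMi₀⟩ := Finset.exists_mem_eq_sup' h fun i => |u i|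
  set M := (resid I u).sup' h fun i => |u i| with hMdef
  set S := I.image fun i => |u i|
  have hξM : xiMap I u M ≠ 0 := hMi₀ ▸ xiMap_abs_ne_zero I u (Finset.mem_filter.mp hi₀).2
  have hM : 0 < M :=
    (hMi₀ ▸ abs_nonneg _ : 0 ≤ M).lt_of_ne fun h0 => hξM (h0 ▸ xiMap_zero I u)
  have hMS : M ∈ S :=
    hMi₀ ▸ Finset.mem_image_of_mem (fun i => |u i|) (Finset.mem_filter.mp hi₀).1
  have hS : ∀ α ∈ S, (xiMap I u α : ℝ) ≠ 0 → 0 ≤ α ∧ α ≤ M := by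
    intro α hα hξ
    obtain ⟨j, -, rfl⟩ := Finset.mem_image.mp hα
    obtain ⟨i, hi, hui⟩ :=
      exists_mem_resid_abs_eq_of_xiMap_ne_zero I u (Int.cast_ne_zero.mp hξ)
    rw [abs_abs] at hui
    exact ⟨abs_nonneg _, hui ▸ Finset.le_sup' (fun i => |u i|) hi⟩
  have hfactor (p : ℕ) : ∑ i ∈ I, u i ^ (2 * p + 1) =
      M ^ (2 * p + 1) * ∑ α ∈ S, (xiMap I u α : ℝ) * (α / M) ^ (2 * p + 1) := by
    rw [sum_pow_eq_sum_xiMap_mul_pow I u (odd_two_mul_add_one p), Finset.mul_sum]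
    refine Finset.sum_congr rfl fun α _ => ?_
    rw [div_pow, mul_left_comm, mul_div_cancel₀ _ (pow_ne_zero _ hM.ne')]
  rw [Fop_eq_sign_mul I u h, ← hMdef, mul_comm]
  simp_rw [hfactor, oddRoot_pow_mul hM.le]
  exact (tendsto_oddRoot_of_tendsto (tendsto_sum_mul_div_pow hM hMS hS)
    (Int.cast_ne_zero.mpr hξM)).const_mul M

theorem stmt1_general (n : ℕ) (x : Fin n → ℝ) :
    Filter.Tendsto (fun p : ℕ => oddRoot p (∑ i, x i ^ (2 * p + 1)))
      Filter.atTop (nhds (Fop Finset.univ x)) :=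
  tendsto_oddRoot_sum_pow Finset.univ x

/-- the sequence `p ↦ (Σ_i x_i^{2p+1})^{1/(2p+1)}` converges to `⊞_{i∈[n]} x_i`. -/
theorem stmt1 (n : ℕ) (hn : 1 ≤ n) (x : Fin n → ℝ) :
    Filter.Tendsto (fun p : ℕ => oddRoot p (∑ i, x i ^ (2 * p + 1)))
      Filter.atTop (nhds (Fop Finset.univ x)) :=
  stmt1_general n x
end

section
/- For all x, y ∈ ℝⁿ, the sequence p ↦ (Σ_{i∈[n]} (x_i^{2p+1} − y_i^{2p+1})²)^{1/(2(2p+1))} converges as p → ∞ to d_⊞(x,y) := max_{i∈[n]} |x_i ⊟ y_i|. -/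
open Filter Finset

/-! With `q = 2p + 1` and `tᵢ = |xᵢ^q - yᵢ^q|^(1/q)`, the `i`-th summand is `tᵢ^(2q)`, so the
sequence is the `ℓ^(2q)`-norm of `t`, squeezed between `maxᵢ tᵢ` and `n^(1/(2q)) · maxᵢ tᵢ`.
Each `tᵢ` tends to `|xᵢ ⊟ yᵢ|`: if `|xᵢ| ≠ |yᵢ|` the larger power dominates `xᵢ^q - yᵢ^q`; if
`yᵢ = xᵢ` the difference vanishes; and if `yᵢ = -xᵢ` it equals `2 xᵢ^q` because `q` is odd. -/

open Topology

section PowerMeans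

variable {ι α : Type*} [Fintype ι] {l : Filter α}

theorem Filter.Tendsto.ciSup_nhds_apply {L : Type*} [ConditionallyCompleteLattice L]
    [TopologicalSpace L] [ContinuousSup L] [Nonempty ι] {f : ι → α → L} {g : ι → L}
    (hf : ∀ i, Tendsto (f i) l (𝓝 (g i))) :
    Tendsto (fun a => ⨆ i, f i a) l (𝓝 (⨆ i, g i)) := by
  simpa only [← Finset.sup'_univ_eq_ciSup] using
    Tendsto.finset_sup'_nhds_apply univ_nonempty fun i _ => hf i

theorem Real.iSup_le_sum_rpow_rpow_inv {f : ι → ℝ} (hf : ∀ i, 0 ≤ f i) {r : ℝ} (hr : 0 < r) :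
    ⨆ i, f i ≤ (∑ i, f i ^ r) ^ r⁻¹ := by
  have hpow : ∀ i, 0 ≤ f i ^ r := fun i => Real.rpow_nonneg (hf i) r
  refine Real.iSup_le (fun i => ?_) (Real.rpow_nonneg (sum_nonneg fun i _ => hpow i) _)
  calc f i = (f i ^ r) ^ r⁻¹ := (Real.rpow_rpow_inv (hf i) hr.ne').symm
    _ ≤ (∑ j, f j ^ r) ^ r⁻¹ :=
      Real.rpow_le_rpow (hpow i) (single_le_sum (fun j _ => hpow j) (mem_univ i)) (by positivity)

theorem Real.sum_rpow_rpow_inv_le_card_mul_iSup {f : ι → ℝ} (hf : ∀ i, 0 ≤ f i) {r : ℝ}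
    (hr : 0 < r) : (∑ i, f i ^ r) ^ r⁻¹ ≤ (Fintype.card ι : ℝ) ^ r⁻¹ * ⨆ i, f i := by
  have hM : 0 ≤ ⨆ i, f i := Real.iSup_nonneg hf
  calc (∑ i, f i ^ r) ^ r⁻¹ ≤ (∑ _i : ι, (⨆ i, f i) ^ r) ^ r⁻¹ := by
        gcongr with i
        · exact sum_nonneg fun j _ => Real.rpow_nonneg (hf j) r
        · exact hf i
        · exact le_ciSup (Finite.bddAbove_range f) i
    _ = (Fintype.card ι : ℝ) ^ r⁻¹ * ⨆ i, f i := by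
        rw [sum_const, card_univ, nsmul_eq_mul, Real.mul_rpow (by positivity) (by positivity),
          Real.rpow_rpow_inv hM hr.ne']

theorem tendsto_sum_rpow_rpow_inv_atTop {f : ι → α → ℝ} {g : ι → ℝ} {r : α → ℝ}
    (hf₀ : ∀ i a, 0 ≤ f i a) (hf : ∀ i, Tendsto (f i) l (𝓝 (g i))) (hr : Tendsto r l atTop) :
    Tendsto (fun a => (∑ i, f i a ^ r a) ^ (r a)⁻¹) l (𝓝 (⨆ i, g i)) := by
  have hr₀ : ∀ᶠ a in l, 0 < r a := hr.eventually_gt_atTop 0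
  rcases isEmpty_or_nonempty ι with hι | hι
  · refine tendsto_const_nhds.congr' (hr₀.mono fun a ha => ?_)
    simp [Real.zero_rpow (inv_ne_zero ha.ne')]
  have hcard : Tendsto (fun a => (Fintype.card ι : ℝ) ^ (r a)⁻¹) l (𝓝 1) := by
    simpa using tendsto_const_nhds.rpow (tendsto_inv_atTop_zero.comp hr)
      (Or.inl (Nat.cast_ne_zero.2 Fintype.card_ne_zero))
  have hsup := Tendsto.ciSup_nhds_apply hf
  refine tendsto_of_tendsto_of_tendsto_of_le_of_le' hsup (by simpa using hcard.mul hsup)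
    (hr₀.mono fun a ha => Real.iSup_le_sum_rpow_rpow_inv (hf₀ · a) ha)
    (hr₀.mono fun a ha => Real.sum_rpow_rpow_inv_le_card_mul_iSup (hf₀ · a) ha)

end PowerMeans

theorem tendsto_abs_pow_sub_pow_rpow_inv_of_abs_lt {a b : ℝ} (h : |b| < |a|) :
    Tendsto (fun k : ℕ => |a ^ k - b ^ k| ^ (k : ℝ)⁻¹) atTop (𝓝 |a|) := by
  have ha : a ≠ 0 := abs_pos.1 ((abs_nonneg b).trans_lt h)
  have hratio : Tendsto (fun k : ℕ => |1 - (b / a) ^ k|) atTop (𝓝 1) := by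
    have hba : |b / a| < 1 := by rwa [abs_div, div_lt_one (abs_pos.2 ha)]
    simpa using ((tendsto_const_nhds (x := (1 : ℝ))).sub
      (tendsto_pow_atTop_nhds_zero_of_abs_lt_one hba)).abs
  have hroot := hratio.rpow (tendsto_inv_atTop_zero.comp tendsto_natCast_atTop_atTop)
    (Or.inl one_ne_zero)
  have hlim : Tendsto (fun k : ℕ => |a| * |1 - (b / a) ^ k| ^ (k : ℝ)⁻¹) atTop (𝓝 |a|) := by
    simpa [Function.comp_def] using hroot.const_mul |a|
  refine hlim.congr' ?_
  filter_upwards [eventually_ne_atTop 0] with k hk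
  have hfactor : a ^ k - b ^ k = a ^ k * (1 - (b / a) ^ k) := by
    rw [div_pow, mul_sub, mul_one, mul_div_cancel₀ _ (pow_ne_zero k ha)]
  rw [hfactor, abs_mul, abs_pow, Real.mul_rpow (by positivity) (by positivity),
    Real.pow_rpow_inv_natCast (abs_nonneg a) hk]

theorem tendsto_two_mul_add_one_atTop : Tendsto (fun p : ℕ => 2 * p + 1) atTop atTop :=
  tendsto_atTop_mono (fun p => by simp only [id]; omega) tendsto_id

theorem tendsto_abs_odd_pow_sub_pow_rpow_inv (a b : ℝ) :
    Tendsto (fun p : ℕ => |a ^ (2 * p + 1) - b ^ (2 * p + 1)| ^ ((2 * p + 1 : ℕ) : ℝ)⁻¹) atTop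
      (𝓝 |bop a (-b)|) := by
  rcases lt_trichotomy |b| |a| with h | h | h
  · rw [show bop a (-b) = a by simp [bop, h]]
    exact (tendsto_abs_pow_sub_pow_rpow_inv_of_abs_lt h).comp tendsto_two_mul_add_one_atTop
  · rcases abs_eq_abs.1 h with rfl | rfl
    · rw [show bop b (-b) = 0 by simp [bop], abs_zero]
      refine tendsto_const_nhds.congr fun p => ?_
      rw [sub_self, abs_zero, Real.zero_rpow (by positivity)]
    · rw [show bop a (-(-a)) = a by simp [bop]]
      have htwo : Tendsto (fun p : ℕ => (2 : ℝ) ^ ((2 * p + 1 : ℕ) : ℝ)⁻¹) atTop (𝓝 1) := by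
        simpa [Function.comp_def] using tendsto_const_nhds.rpow (tendsto_inv_atTop_zero.comp
          (tendsto_natCast_atTop_atTop.comp tendsto_two_mul_add_one_atTop)) (Or.inl two_ne_zero)
      have hlim :
          Tendsto (fun p : ℕ => (2 : ℝ) ^ ((2 * p + 1 : ℕ) : ℝ)⁻¹ * |a|) atTop (𝓝 |a|) := by
        simpa using htwo.mul_const |a|
      refine hlim.congr fun p => Eq.symm ?_
      rw [Odd.neg_pow ⟨p, rfl⟩, sub_neg_eq_add, ← two_mul, abs_mul, abs_pow, abs_two,
        Real.mul_rpow (by positivity) (by positivity),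
        Real.pow_rpow_inv_natCast (abs_nonneg a) (by omega)]
  · rw [show bop a (-b) = -b by simp [bop, h, not_lt.2 h.le], abs_neg]
    refine ((tendsto_abs_pow_sub_pow_rpow_inv_of_abs_lt h).comp
      tendsto_two_mul_add_one_atTop).congr fun p => ?_
    rw [Function.comp_apply, abs_sub_comm]

/-- the sequence of generalized distances converges to `d_⊞`. -/
theorem stmt6 (n : ℕ) (x y : Fin n → ℝ) :
    Filter.Tendsto
      (fun p : ℕ =>
        (∑ i, (x i ^ (2 * p + 1) - y i ^ (2 * p + 1)) ^ 2)
          ^ ((1 : ℝ) / (2 * (2 * (p : ℝ) + 1))))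
      Filter.atTop (nhds (dB x y)) := by
  have hr : Tendsto (fun p : ℕ => 2 * ((2 * p + 1 : ℕ) : ℝ)) atTop atTop :=
    (tendsto_natCast_atTop_atTop.comp tendsto_two_mul_add_one_atTop).const_mul_atTop two_pos
  refine (tendsto_sum_rpow_rpow_inv_atTop (fun _ _ => by positivity)
    (fun i => tendsto_abs_odd_pow_sub_pow_rpow_inv (x i) (y i)) hr).congr fun p => ?_
  have hq : ((2 * p + 1 : ℕ) : ℝ) ≠ 0 := by positivity
  congr 1
  · refine sum_congr rfl fun i _ => ?_
    rw [← Real.rpow_mul (abs_nonneg _), mul_left_comm, inv_mul_cancel₀ hq, mul_one, Real.rpow_two,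
      sq_abs]
  · push_cast
    rw [one_div]
end

section
/- The map d_⊞(x,y) = max_{i∈[n]} |x_i ⊟ y_i| is an ultrametric on ℝⁿ: for all x, y, z ∈ ℝⁿ, (1) d_⊞(x,y) = d_⊞(y,x); (2) d_⊞(x,y) = 0 if and only if x = y; (3) d_⊞(x,y) ≤ max{d_⊞(x,z), d_⊞(z,y)}. -/
/-!
Writing `δ(a, b) = |a ⊟ b|`, one has `δ(a, b) = max |a| |b|` when `|a| ≠ |b|` and
`δ(a, b) = |a - b| / 2 ≤ |a|` when `|a| = |b|`. So `δ(a, b) ≤ max |a| |b|`, and this bound is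
dominated by `max (δ(a, c)) (δ(c, b))` unless `|a| = |b| = |c|`; in that last case
`a, b, c ∈ {r, -r}` and `c` coincides with `a` or with `-a`. The distance `d_⊞` is the maximum
of these coordinatewise ultrametrics, hence an ultrametric.
-/

open Filter Finset

section bop

variable {a b c : ℝ}

lemma abs_bop_neg_of_abs_ne (h : |a| ≠ |b|) : |bop a (-b)| = max |a| |b| := by
  unfold bop
  rw [abs_neg]
  rcases h.lt_or_gt with h | h
  · rw [if_neg (not_lt.mpr h.le), if_pos h, abs_neg, max_eq_right h.le]
  · rw [if_pos h, max_eq_left h.le]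

lemma abs_bop_neg_of_abs_eq (h : |a| = |b|) : |bop a (-b)| = |a - b| / 2 := by
  unfold bop
  rw [abs_neg, if_neg h.not_gt, if_neg h.not_lt, abs_div, abs_two, sub_eq_add_neg]

lemma abs_bop_neg_le_max_abs (a b : ℝ) : |bop a (-b)| ≤ max |a| |b| := by
  by_cases h : |a| = |b|
  · rw [abs_bop_neg_of_abs_eq h, ← h, max_self]
    linarith [abs_sub a b]
  · exact (abs_bop_neg_of_abs_ne h).le

lemma abs_le_abs_bop_neg_of_abs_ne (h : |a| ≠ |b|) : |a| ≤ |bop a (-b)| :=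
  (abs_bop_neg_of_abs_ne h).ge.trans' (le_max_left _ _)

lemma abs_bop_neg_comm (a b : ℝ) : |bop a (-b)| = |bop b (-a)| := by
  by_cases h : |a| = |b|
  · rw [abs_bop_neg_of_abs_eq h, abs_bop_neg_of_abs_eq h.symm, abs_sub_comm]
  · rw [abs_bop_neg_of_abs_ne h, abs_bop_neg_of_abs_ne (Ne.symm h), max_comm]

lemma abs_bop_neg_eq_zero_iff : |bop a (-b)| = 0 ↔ a = b := by
  by_cases h : |a| = |b|
  · rw [abs_bop_neg_of_abs_eq h, div_eq_zero_iff, abs_eq_zero, sub_eq_zero]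
    simp
  · rw [abs_bop_neg_of_abs_ne h]
    refine iff_of_false (fun h0 => h ?_) fun hab => h (congrArg abs hab)
    obtain ⟨ha, hb⟩ := max_le_iff.mp h0.le
    exact (ha.antisymm (abs_nonneg a)).trans (hb.antisymm (abs_nonneg b)).symm

lemma abs_le_max_abs_bop_neg (h : ¬(|a| = |c| ∧ |c| = |b|)) :
    |a| ≤ max |bop a (-c)| |bop c (-b)| := by
  by_cases hac : |a| = |c|
  · have hcb : |c| ≠ |b| := fun hcb => h ⟨hac, hcb⟩
    rw [hac]
    exact (abs_le_abs_bop_neg_of_abs_ne hcb).trans (le_max_right _ _)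
  · exact (abs_le_abs_bop_neg_of_abs_ne hac).trans (le_max_left _ _)

lemma abs_bop_neg_le_max (a b c : ℝ) :
    |bop a (-b)| ≤ max |bop a (-c)| |bop c (-b)| := by
  by_cases hall : |a| = |c| ∧ |c| = |b|
  · obtain ⟨hac, hcb⟩ := hall
    obtain rfl | rfl : c = a ∨ c = -a := abs_eq_abs.mp hac.symm
    · exact le_max_right _ _
    · have hc : |bop a (- -a)| = |a| := by
        rw [abs_bop_neg_of_abs_eq hac, sub_neg_eq_add, ← two_mul, abs_mul, abs_two]
        ring
      calc |bop a (-b)| ≤ max |a| |b| := abs_bop_neg_le_max_abs a b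
        _ = |bop a (- -a)| := by rw [← hcb, ← hac, max_self, hc]
        _ ≤ _ := le_max_left _ _
  · have hb : |b| ≤ max |bop a (-c)| |bop c (-b)| := by
      rw [abs_bop_neg_comm a c, abs_bop_neg_comm c b, max_comm]
      exact abs_le_max_abs_bop_neg fun h => hall ⟨h.2.symm, h.1.symm⟩
    exact (abs_bop_neg_le_max_abs a b).trans (max_le (abs_le_max_abs_bop_neg hall) hb)

end bop

section dB

variable {n : ℕ} (x y : Fin n → ℝ)

lemma dB_nonneg : 0 ≤ dB x y :=
  Real.iSup_nonneg fun _ => abs_nonneg _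

lemma abs_bop_neg_le_dB (i : Fin n) : |bop (x i) (-(y i))| ≤ dB x y :=
  le_ciSup (f := fun j => |bop (x j) (-(y j))|) (Finite.bddAbove_range _) i

lemma dB_le_iff {r : ℝ} (hr : 0 ≤ r) : dB x y ≤ r ↔ ∀ i, |bop (x i) (-(y i))| ≤ r :=
  ⟨fun h i => (abs_bop_neg_le_dB x y i).trans h, fun h => Real.iSup_le h hr⟩

lemma dB_comm : dB x y = dB y x :=
  iSup_congr fun _ => abs_bop_neg_comm _ _

lemma dB_eq_zero_iff : dB x y = 0 ↔ x = y := by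
  rw [← (dB_nonneg x y).ge_iff_eq', dB_le_iff x y le_rfl, funext_iff]
  exact forall_congr' fun i => (abs_nonneg _).ge_iff_eq'.trans abs_bop_neg_eq_zero_iff

lemma dB_le_max (z : Fin n → ℝ) : dB x y ≤ max (dB x z) (dB z y) :=
  (dB_le_iff x y (le_max_of_le_left (dB_nonneg x z))).mpr fun i =>
    (abs_bop_neg_le_max _ _ (z i)).trans
      (max_le_max (abs_bop_neg_le_dB x z i) (abs_bop_neg_le_dB z y i))

end dB

/-- `d_⊞` is an ultrametric on ℝⁿ. -/
theorem stmt7 (n : ℕ) (x y z : Fin n → ℝ) :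
    dB x y = dB y x ∧ (dB x y = 0 ↔ x = y) ∧ dB x y ≤ max (dB x z) (dB z y) :=
  ⟨dB_comm x y, dB_eq_zero_iff x y, dB_le_max x y z⟩
end

section
/- For all nonzero x, y ∈ ℝ², max{ |x₁y₁ ⊞ x₂y₂| , |x₁y₂ ⊟ x₂y₁| } = ‖x‖_∞ ‖y‖_∞; equivalently, the limit pseudo-cosine cos_∞(x,y) = (x₁y₁ ⊞ x₂y₂)/(‖x‖_∞‖y‖_∞) and limit pseudo-sine sin_∞(x,y) = (x₁y₂ ⊟ x₂y₁)/(‖x‖_∞‖y‖_∞) satisfy max{|cos_∞(x,y)|, |sin_∞(x,y)|} = 1. -/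
/-!
`|a ⊞ b| = max |a| |b|` unless `a = -b`. The four products satisfy
`(x₀y₀)(x₁y₁) = (x₀y₁)(x₁y₀)`, so if one of the pairs `(x₀y₀, x₁y₁)`, `(x₀y₁, x₁y₀)` cancels in
`⊞` resp. `⊟`, its common modulus is dominated by the other pair. Both cannot cancel, since by
Lagrange's identity `(x₀y₀ + x₁y₁)² + (x₀y₁ - x₁y₀)² = (x₀² + x₁²)(y₀² + y₁²) > 0`. Hence the
maximum is the largest `|xᵢyⱼ|`, which is `‖x‖_∞ ‖y‖_∞`.
-/

open Filter Finset

lemma chebNorm_fin_two (x : Fin 2 → ℝ) : chebNorm x = max |x 0| |x 1| :=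
  eq_of_forall_ge_iff fun c => by
    simp [chebNorm, ciSup_le_iff (Set.finite_range _).bddAbove, Fin.forall_fin_two]

lemma chebNorm_pos {n : ℕ} {x : Fin n → ℝ} (hx : x ≠ 0) : 0 < chebNorm x := by
  obtain ⟨i, hi⟩ := Function.ne_iff.1 hx
  exact (abs_pos.2 hi).trans_le (le_ciSup (f := fun i => |x i|) (Set.finite_range _).bddAbove i)

lemma max_abs_mul_max_abs (a b c d : ℝ) :
    max |a| |b| * max |c| |d| = max (max |a * c| |b * d|) (max |a * d| |b * c|) := by
  rw [max_mul_of_nonneg _ _ (le_max_of_le_left (abs_nonneg c)),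
    mul_max_of_nonneg _ _ (abs_nonneg a), mul_max_of_nonneg _ _ (abs_nonneg b)]
  simp only [abs_mul]
  ac_rfl

lemma abs_bop_le_max (a b : ℝ) : |bop a b| ≤ max |a| |b| := by
  unfold bop
  split_ifs
  · exact le_max_left _ _
  · exact le_max_right _ _
  · rw [abs_div, abs_two, div_le_iff₀ two_pos]
    linarith [abs_add_le a b, le_max_left |a| |b|, le_max_right |a| |b|]

lemma abs_bop_of_ne_neg {a b : ℝ} (h : a ≠ -b) : |bop a b| = max |a| |b| := by
  unfold bop
  split_ifs with hba hab
  · exact (max_eq_left hba.le).symm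
  · exact (max_eq_right hab.le).symm
  · obtain rfl : a = b := (abs_eq_abs.1 (le_antisymm (not_lt.1 hba) (not_lt.1 hab))).resolve_right h
    rw [add_self_div_two, max_self]

lemma max_abs_le_max_abs_of_mul_eq_mul {p q r s : ℝ} (h : p * q = r * s) (hrs : |r| = |s|) :
    max |r| |s| ≤ max |p| |q| := by
  have hsq : |r| * |s| = |p| * |q| := by rw [← abs_mul, ← abs_mul, h]
  rw [hrs] at hsq
  rw [hrs, max_self]
  nlinarith [le_max_left |p| |q|, le_max_right |p| |q|, abs_nonneg s, abs_nonneg p]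

lemma max_abs_bop_eq_max_max {p q r s : ℝ} (h : p * q = r * s) (hnd : p ≠ -q ∨ r ≠ s) :
    max |bop p q| |bop r (-s)| = max (max |p| |q|) (max |r| |s|) := by
  have hs : |bop r (-s)| ≤ max |r| |s| := by simpa only [abs_neg] using abs_bop_le_max r (-s)
  by_cases hpq : p = -q
  · have hrs : r ≠ -(-s) := by rw [neg_neg]; exact hnd.resolve_left (not_not.2 hpq)
    have hle : max |p| |q| ≤ max |r| |s| :=
      max_abs_le_max_abs_of_mul_eq_mul h.symm (by rw [hpq, abs_neg])
    rw [abs_bop_of_ne_neg hrs, abs_neg, max_eq_right hle,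
      max_eq_right ((abs_bop_le_max p q).trans hle)]
  · rw [abs_bop_of_ne_neg hpq]
    by_cases hrs : r = s
    · have hle : max |r| |s| ≤ max |p| |q| := max_abs_le_max_abs_of_mul_eq_mul h (by rw [hrs])
      rw [max_eq_left (hs.trans hle), max_eq_left hle]
    · rw [abs_bop_of_ne_neg (by rwa [neg_neg]), abs_neg]

lemma eq_zero_or_eq_zero_of_dot_eq_zero_of_cross_eq_zero {x y : Fin 2 → ℝ}
    (hdot : x 0 * y 0 + x 1 * y 1 = 0) (hcross : x 0 * y 1 - x 1 * y 0 = 0) : x = 0 ∨ y = 0 := by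
  have lagrange : (x 0 ^ 2 + x 1 ^ 2) * (y 0 ^ 2 + y 1 ^ 2) = 0 := by
    linear_combination (x 0 * y 0 + x 1 * y 1) * hdot + (x 0 * y 1 - x 1 * y 0) * hcross
  have eq_zero_of_sq_add_sq : ∀ z : Fin 2 → ℝ, z 0 ^ 2 + z 1 ^ 2 = 0 → z = 0 := fun z hz => by
    obtain ⟨h0, h1⟩ := (add_eq_zero_iff_of_nonneg (sq_nonneg _) (sq_nonneg _)).1 hz
    ext i
    fin_cases i
    exacts [pow_eq_zero_iff two_ne_zero |>.1 h0, pow_eq_zero_iff two_ne_zero |>.1 h1]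
  exact (mul_eq_zero.1 lagrange).imp (eq_zero_of_sq_add_sq x) (eq_zero_of_sq_add_sq y)

/-- max of limit pseudo-cosine and pseudo-sine absolute values is 1. -/
theorem stmt15 (x y : Fin 2 → ℝ) (hx : x ≠ 0) (hy : y ≠ 0) :
    max |bop (x 0 * y 0) (x 1 * y 1)| |bop (x 0 * y 1) (-(x 1 * y 0))|
        = chebNorm x * chebNorm y ∧
    max |bop (x 0 * y 0) (x 1 * y 1) / (chebNorm x * chebNorm y)|
        |bop (x 0 * y 1) (-(x 1 * y 0)) / (chebNorm x * chebNorm y)| = 1 := by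
  have hnd : x 0 * y 0 ≠ -(x 1 * y 1) ∨ x 0 * y 1 ≠ x 1 * y 0 := by
    by_contra! h
    exact (eq_zero_or_eq_zero_of_dot_eq_zero_of_cross_eq_zero (eq_neg_iff_add_eq_zero.1 h.1)
      (sub_eq_zero.2 h.2)).elim hx hy
  have hmax : max |bop (x 0 * y 0) (x 1 * y 1)| |bop (x 0 * y 1) (-(x 1 * y 0))|
      = chebNorm x * chebNorm y := by
    rw [max_abs_bop_eq_max_max (by ring) hnd, chebNorm_fin_two, chebNorm_fin_two,
      max_abs_mul_max_abs]
  have hpos : 0 < chebNorm x * chebNorm y := mul_pos (chebNorm_pos hx) (chebNorm_pos hy)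
  refine ⟨hmax, ?_⟩
  rw [abs_div, abs_div, abs_of_pos hpos, max_div_div_right hpos.le, hmax, div_self hpos.ne']
end

section
/- Identify a complex number z = a + ib with the pair (a,b) ∈ ℝ², and define the product z ⊠ w := (ac ⊟ bd, ad ⊞ bc) for z = (a,b), w = (c,d), the conjugate z̄ := (a,−b), and the limit modulus |z|_∞ := max{|a|,|b|}. Then: (1) z ⊠ z̄ = (|z|_∞², 0), so √(z ⊠ z̄) = |z|_∞; and (2) for all z, w, |z ⊠ w|_∞ = |z|_∞ |w|_∞ (in particular, if |z|_∞ = |w|_∞ = 1 then |z ⊠ w|_∞ = 1). -/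
open Filter Finset

/-- The limit complex product `z ⊠ w` on ℝ² ≃ ℂ. -/
noncomputable def cmul (z w : ℝ × ℝ) : ℝ × ℝ :=
  (bop (z.1 * w.1) (-(z.2 * w.2)), bop (z.1 * w.2) (z.2 * w.1))

/-- Complex conjugation on ℝ² ≃ ℂ. -/
def cconj (z : ℝ × ℝ) : ℝ × ℝ := (z.1, -z.2)

/-- The limit modulus `|z|_∞ = max{|a|,|b|}`. -/
noncomputable def cmod (z : ℝ × ℝ) : ℝ := max |z.1| |z.2|

/-! The midpoint case `|x| = |y|` of `⊞` is where all the difficulty lies: there `x ⊞ y` can be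
much smaller than `x` and `y`, e.g. `x ⊞ (-x) = 0`. For `z ⊠ w` this cannot make both coordinates
small: the four products `|ac|, |bd|, |ad|, |bc|` satisfy `|ac|·|bd| = |ad|·|bc|`, so a tie in one
coordinate is dominated by the other coordinate, and when both coordinates tie, all four products
are equal and `(ac - bd)(ad + bc) = 0`, so one coordinate of `z ⊠ w` is `0` and the other carries
the full size `|z|_∞ |w|_∞`. -/

section Bop

variable {x y : ℝ}

lemma bop_eq_left (h : |y| < |x|) : bop x y = x := if_pos h

lemma bop_eq_right (h : |x| < |y|) : bop x y = y := by
  rw [bop, if_neg h.le.not_gt, if_pos h]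

lemma bop_of_abs_eq (h : |x| = |y|) : bop x y = (x + y) / 2 := by
  rw [bop, if_neg h.ge.not_gt, if_neg h.le.not_gt]

lemma abs_bop_le_max_s16 (x y : ℝ) : |bop x y| ≤ max |x| |y| := by
  rcases lt_trichotomy |x| |y| with h | h | h
  · rw [bop_eq_right h]
    exact le_max_right _ _
  · rw [bop_of_abs_eq h, abs_div, abs_two, h, max_self]
    linarith [abs_add_le x y]
  · rw [bop_eq_left h]
    exact le_max_left _ _

lemma abs_bop_of_abs_ne (h : |x| ≠ |y|) : |bop x y| = max |x| |y| := by
  rcases h.lt_or_gt with h | h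
  · rw [bop_eq_right h, max_eq_right h.le]
  · rw [bop_eq_left h, max_eq_left h.le]

lemma bop_of_nonneg (hx : 0 ≤ x) (hy : 0 ≤ y) : bop x y = max x y := by
  rcases lt_trichotomy x y with h | rfl | h
  · rw [bop_eq_right (by rwa [abs_of_nonneg hx, abs_of_nonneg hy]), max_eq_right h.le]
  · rw [bop_of_abs_eq rfl, max_self, add_self_div_two]
  · rw [bop_eq_left (by rwa [abs_of_nonneg hx, abs_of_nonneg hy]), max_eq_left h.le]

lemma bop_neg_self (x : ℝ) : bop (-x) x = 0 := by
  rw [bop_of_abs_eq (abs_neg x), neg_add_cancel, zero_div]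

end Bop

lemma cmul_cconj (z : ℝ × ℝ) : cmul z (cconj z) = (cmod z ^ 2, 0) := by
  obtain ⟨a, b⟩ := z
  have hre : bop (a * a) (-(b * -b)) = max |a| |b| ^ 2 := by
    rw [neg_mul_eq_mul_neg, neg_neg, bop_of_nonneg (mul_self_nonneg a) (mul_self_nonneg b),
      ← abs_mul_abs_self a, ← abs_mul_abs_self b, ← sq, ← sq]
    exact (pow_left_monotoneOn.map_max (abs_nonneg a) (abs_nonneg b)).symm
  have him : bop (a * -b) (b * a) = 0 := by
    rw [mul_neg, mul_comm b a, bop_neg_self]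
  simp only [cmul, cconj, cmod, hre, him]

lemma max_le_max_of_eq_of_mul_eq {x y u v : ℝ} (hu : 0 ≤ u) (hv : 0 ≤ v) (hxy : x = y)
    (h : x * y = u * v) : max x y ≤ max u v := by
  rw [← hxy, max_self]
  by_contra! hlt
  have := mul_lt_mul'' (lt_of_le_of_lt (le_max_left u v) hlt)
    (lt_of_le_of_lt (le_max_right u v) hlt) hu hv
  rw [← h, hxy] at this
  exact this.ne rfl

lemma cmod_mul_cmod (z w : ℝ × ℝ) :
    cmod z * cmod w =
      max (max |z.1 * w.1| |z.2 * w.2|) (max |z.1 * w.2| |z.2 * w.1|) := by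
  simp only [cmod, abs_mul]
  rw [max_mul_of_nonneg _ _ (le_max_of_le_left (abs_nonneg _)),
    mul_max_of_nonneg _ _ (abs_nonneg _), mul_max_of_nonneg _ _ (abs_nonneg _)]
  ac_rfl

lemma sub_mul_add_eq_zero_of_sq_eq_sq {a b c d : ℝ} (h₁ : (a * c) ^ 2 = (b * d) ^ 2)
    (h₂ : (a * d) ^ 2 = (b * c) ^ 2) : (a * c - b * d) * (a * d + b * c) = 0 := by
  set X := a * c - b * d
  set Y := a * d + b * c
  have e₁ : (a ^ 2 - b ^ 2) * (c ^ 2 + d ^ 2) = 0 := by linear_combination h₁ + h₂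
  have e₂ : (a ^ 2 + b ^ 2) * (c ^ 2 - d ^ 2) = 0 := by linear_combination h₁ - h₂
  -- `X ^ 2 + Y ^ 2 = (a ^ 2 + b ^ 2) * (c ^ 2 + d ^ 2)` is multiplicativity of `|·|²` on `ℂ`.
  have : X * Y * (X ^ 2 + Y ^ 2) = 0 := by
    linear_combination (c * d * (a ^ 2 + b ^ 2)) * e₁ + (a * b * (c ^ 2 + d ^ 2)) * e₂
  rcases mul_eq_zero.1 this with h | h
  · exact h
  · have hX : X = 0 := by nlinarith [sq_nonneg X, sq_nonneg Y]
    rw [hX, zero_mul]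

lemma abs_mul_le_max_abs_bop_of_abs_eq {a b c d : ℝ} (h₁ : |a * c| = |b * d|)
    (h₂ : |a * d| = |b * c|) (hac : |a * c| = |a * d|) :
    |a * c| ≤ max |bop (a * c) (-(b * d))| |bop (a * d) (b * c)| := by
  have s₁ : (a * c) ^ 2 = (b * d) ^ 2 := (sq_eq_sq_iff_abs_eq_abs _ _).2 h₁
  have s₂ : (a * d) ^ 2 = (b * c) ^ 2 := (sq_eq_sq_iff_abs_eq_abs _ _).2 h₂
  have s₃ : (a * c) ^ 2 = (a * d) ^ 2 := (sq_eq_sq_iff_abs_eq_abs _ _).2 hac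
  rw [bop_of_abs_eq (by rwa [abs_neg]), bop_of_abs_eq h₂, ← sub_eq_add_neg]
  rcases mul_eq_zero.1 (sub_mul_add_eq_zero_of_sq_eq_sq s₁ s₂) with hX | hY
  · refine le_max_of_le_right (sq_le_sq.1 (le_of_eq ?_))
    have : a * c = b * d := sub_eq_zero.1 hX
    linear_combination (a * c / 2) * this + 1 / 4 * s₂ + 1 / 2 * s₃
  · refine le_max_of_le_left (sq_le_sq.1 (le_of_eq ?_))
    have : a * d = -(b * c) := eq_neg_of_add_eq_zero_left hY
    linear_combination (b * c / 2) * this + 1 / 4 * s₁ + 1 / 2 * s₂ + 1 / 2 * s₃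

lemma cmod_cmul (z w : ℝ × ℝ) : cmod (cmul z w) = cmod z * cmod w := by
  obtain ⟨a, b⟩ := z
  obtain ⟨c, d⟩ := w
  rw [cmod_mul_cmod]
  simp only [cmod, cmul]
  have hprod : |a * c| * |b * d| = |a * d| * |b * c| := by
    simp only [← abs_mul]
    ring_nf
  have hmixed₁ (h : |a * c| = |b * d|) : max |a * c| |b * d| ≤ max |a * d| |b * c| :=
    max_le_max_of_eq_of_mul_eq (abs_nonneg _) (abs_nonneg _) h hprod
  have hmixed₂ (h : |a * d| = |b * c|) : max |a * d| |b * c| ≤ max |a * c| |b * d| :=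
    max_le_max_of_eq_of_mul_eq (abs_nonneg _) (abs_nonneg _) h hprod.symm
  refine le_antisymm ?_ ?_
  · simpa only [abs_neg] using
      max_le_max (abs_bop_le_max_s16 (a * c) (-(b * d))) (abs_bop_le_max_s16 (a * d) (b * c))
  by_cases h₁ : |a * c| = |b * d| <;> by_cases h₂ : |a * d| = |b * c|
  · have hac : |a * c| = |a * d| := by
      simpa only [h₁, h₂, max_self] using le_antisymm (hmixed₁ h₁) (hmixed₂ h₂)
    rw [← h₁, ← h₂, ← hac, max_self, max_self]
    exact abs_mul_le_max_abs_bop_of_abs_eq h₁ h₂ hac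
  · rw [abs_bop_of_abs_ne h₂, max_eq_right (hmixed₁ h₁)]
    exact le_max_right _ _
  · rw [abs_bop_of_abs_ne (by rwa [abs_neg]), abs_neg, max_eq_left (hmixed₂ h₂)]
    exact le_max_left _ _
  · rw [abs_bop_of_abs_ne (by rwa [abs_neg]), abs_neg, abs_bop_of_abs_ne h₂]

/-- properties of the limit complex product. -/
theorem stmt16 :
    (∀ z : ℝ × ℝ, cmul z (cconj z) = (cmod z ^ 2, 0) ∧
      Real.sqrt ((cmul z (cconj z)).1) = cmod z) ∧
    (∀ z w : ℝ × ℝ, cmod (cmul z w) = cmod z * cmod w) := by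
  refine ⟨fun z => ⟨cmul_cconj z, ?_⟩, cmod_cmul⟩
  rw [cmul_cconj]
  exact Real.sqrt_sq (le_max_of_le_left (abs_nonneg _))
end
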